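/- arXiv:1512.04666 — 3 statements merged into one kernel-verified Lean document; each statement's English description precedes it below -/
import Mathlib

section
/- If u and v are linearly independent vectors in the open unit ball of ℝⁿ, then u ⊕ v ≠ v ⊕ u; consequently, u ⊕ v = v ⊕ u holds if and only if u and v are linearly dependent. -/
/-!
Both `u ⊕ v` and `v ⊕ u` lie in the span of `u` and `v`. Writing `γ x = √(1 - ‖x‖²)` (`invGamma`),
for independent `u, v` equality of their coefficients forces `γ u = γ v` and
`⟪u, v⟫ = -‖u‖² = -‖v‖²`, hence `‖u + v‖ = 0`, which independence forbids. For `v = c • u`,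
the identity `‖x‖² / (1 + γ x) = 1 - γ x` makes both sums equal `(1 + c ‖u‖²)⁻¹ • (1 + c) • u`.
-/

noncomputable def eAdd {n : ℕ} (u v : EuclideanSpace ℝ (Fin n)) : EuclideanSpace ℝ (Fin n) :=
  (1 / (1 + (inner ℝ u v : ℝ))) •
    (u + Real.sqrt (1 - ‖u‖ ^ 2) • v
      + (((inner ℝ u v : ℝ)) / (1 + Real.sqrt (1 - ‖u‖ ^ 2))) • u)

noncomputable def eBall (n : ℕ) : Set (EuclideanSpace ℝ (Fin n)) :=
  Metric.ball (0 : EuclideanSpace ℝ (Fin n)) 1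

open RealInnerProductSpace

noncomputable def invGamma {E : Type*} [Norm E] (x : E) : ℝ :=
  √(1 - ‖x‖ ^ 2)

section InvGamma

variable {E : Type*} [SeminormedAddGroup E] {x : E}

lemma invGamma_nonneg (x : E) : 0 ≤ invGamma x := Real.sqrt_nonneg _

lemma invGamma_sq (hx : ‖x‖ ≤ 1) : invGamma x ^ 2 = 1 - ‖x‖ ^ 2 :=
  Real.sq_sqrt (by nlinarith [norm_nonneg x])

lemma sq_norm_div_one_add_invGamma (hx : ‖x‖ ≤ 1) :
    ‖x‖ ^ 2 / (1 + invGamma x) = 1 - invGamma x := by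
  have hpos : 0 < 1 + invGamma x := by linarith [invGamma_nonneg x]
  rw [div_eq_iff hpos.ne']
  linear_combination invGamma_sq hx

end InvGamma

section EinsteinAddition

variable {n : ℕ} {u v : EuclideanSpace ℝ (Fin n)}

lemma eAdd_eq (u v : EuclideanSpace ℝ (Fin n)) :
    eAdd u v = (1 + ⟪u, v⟫)⁻¹ • ((1 + ⟪u, v⟫ / (1 + invGamma u)) • u + invGamma u • v) := by
  unfold eAdd invGamma
  module

lemma eAdd_smul_self_comm (c : ℝ) (hu : ‖u‖ < 1) (hcu : ‖c • u‖ < 1) :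
    eAdd u (c • u) = eAdd (c • u) u := by
  have hγu := sq_norm_div_one_add_invGamma hu.le
  have hγcu := sq_norm_div_one_add_invGamma hcu.le
  rw [norm_smul, mul_pow, Real.norm_eq_abs, sq_abs] at hγcu
  rw [eAdd_eq, eAdd_eq, real_inner_smul_left, real_inner_smul_right, real_inner_self_eq_norm_sq]
  congr 1
  rw [mul_div_assoc, hγu]
  linear_combination (norm := module) -(hγcu • u)

lemma eAdd_ne_eAdd_of_linearIndependent (hu : ‖u‖ < 1) (hv : ‖v‖ < 1)
    (hli : LinearIndependent ℝ ![u, v]) : eAdd u v ≠ eAdd v u := by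
  intro h
  have hs : 0 < 1 + ⟪u, v⟫ := by
    nlinarith [abs_real_inner_le_norm u v, neg_abs_le ⟪u, v⟫, norm_nonneg u, norm_nonneg v]
  rw [eAdd_eq, eAdd_eq, real_inner_comm u v, add_comm (_ • v)] at h
  obtain ⟨hu_coef, hv_coef⟩ := hli.eq_of_pair (smul_right_injective _ (inv_ne_zero hs.ne') h)
  set s := ⟪u, v⟫
  set a := invGamma u
  set b := invGamma v
  have ha_sq : a ^ 2 = 1 - ‖u‖ ^ 2 := invGamma_sq hu.le
  have hb_sq : b ^ 2 = 1 - ‖v‖ ^ 2 := invGamma_sq hv.le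
  have hs_a : s = (b - 1) * (1 + a) := by
    rw [← div_eq_iff (by linarith [invGamma_nonneg u])]
    linarith
  have hs_b : s = (a - 1) * (1 + b) := by
    rw [← div_eq_iff (by linarith [invGamma_nonneg v])]
    linarith
  have hab : a = b := by linear_combination (hs_a - hs_b) / 2
  have hsum : ‖u + v‖ ^ 2 = 0 := by
    rw [norm_add_sq_real]
    linear_combination ha_sq + hb_sq + hs_a + hs_b - (a - b) * hab
  have huv : (1 : ℝ) • u + (1 : ℝ) • v = 0 := by simpa using hsum
  exact one_ne_zero (LinearIndependent.pair_iff.mp hli 1 1 huv).1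

end EinsteinAddition

theorem stmt_5 {n : ℕ} (u v : EuclideanSpace ℝ (Fin n))
    (hu : u ∈ eBall n) (hv : v ∈ eBall n) :
    (LinearIndependent ℝ ![u, v] → eAdd u v ≠ eAdd v u) ∧
    (eAdd u v = eAdd v u ↔ ¬ LinearIndependent ℝ ![u, v]) := by
  rw [eBall, mem_ball_zero_iff] at hu hv
  have hindep := eAdd_ne_eAdd_of_linearIndependent hu hv
  refine ⟨hindep, fun h hli => hindep hli h, fun hdep => ?_⟩
  rcases eq_or_ne u 0 with rfl | hu0
  · simp [eAdd]
  · obtain ⟨c, rfl⟩ : ∃ c : ℝ, c • u = v := by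
      simpa [LinearIndependent.pair_iff' hu0] using hdep
    exact eAdd_smul_self_comm c hu hv
end

section
/- If f : B^n → B^n is a continuous endomorphism of the Einstein gyrogroup and f(x) = 0 for some x ≠ 0, then f vanishes on the entire diameter through x, i.e., f(s·x/|x|) = 0 for all s ∈ (−1,1). -/
namespace Real

theorem tanh_add (a b : ℝ) : tanh (a + b) = (tanh a + tanh b) / (1 + tanh a * tanh b) := by
  have ha := (cosh_pos a).ne'
  have hb := (cosh_pos b).ne'
  have hab : cosh a * cosh b + sinh a * sinh b ≠ 0 := by rw [← cosh_add]; exact (cosh_pos _).ne'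
  simp only [tanh_eq_sinh_div_cosh, sinh_add, cosh_add]
  field_simp

theorem continuous_tanh : Continuous tanh := by
  simp only [funext tanh_eq_sinh_div_cosh]
  exact continuous_sinh.div continuous_cosh fun r => (cosh_pos r).ne'

end Real

section EinsteinAddition

variable {n : ℕ}

theorem mem_eBall_iff {u : EuclideanSpace ℝ (Fin n)} : u ∈ eBall n ↔ ‖u‖ < 1 := by
  simp [eBall]

theorem eAdd_zero_left (v : EuclideanSpace ℝ (Fin n)) : eAdd 0 v = v := by
  simp [eAdd]

theorem eAdd_smul_self {u : EuclideanSpace ℝ (Fin n)} (hu : ‖u‖ ≤ 1) (c : ℝ) :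
    eAdd u (c • u) = ((1 + c) / (1 + c * ‖u‖ ^ 2)) • u := by
  rw [eAdd, real_inner_smul_right, real_inner_self_eq_norm_sq, smul_smul]
  set s := Real.sqrt (1 - ‖u‖ ^ 2)
  have hs2 : s ^ 2 = 1 - ‖u‖ ^ 2 := Real.sq_sqrt (by nlinarith [norm_nonneg u])
  have hs : 1 + s ≠ 0 := by positivity
  have hcoeff : 1 + s * c + c * ‖u‖ ^ 2 / (1 + s) = 1 + c := by
    field_simp
    linear_combination c * hs2
  rw [← hcoeff]
  module

theorem eAdd_self {u : EuclideanSpace ℝ (Fin n)} (hu : ‖u‖ ≤ 1) :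
    eAdd u u = (2 / (1 + ‖u‖ ^ 2)) • u := by
  simpa [one_add_one_eq_two] using eAdd_smul_self hu 1

theorem eAdd_self_eq_zero_iff {u : EuclideanSpace ℝ (Fin n)} (hu : ‖u‖ ≤ 1) :
    eAdd u u = 0 ↔ u = 0 := by
  rw [eAdd_self hu, smul_eq_zero, or_iff_right (by positivity)]

theorem eAdd_self_eq_self_iff {u : EuclideanSpace ℝ (Fin n)} (hu : ‖u‖ < 1) :
    eAdd u u = u ↔ u = 0 := by
  set k := 2 / (1 + ‖u‖ ^ 2)
  have hk : k - 1 ≠ 0 := by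
    rw [sub_ne_zero, Ne, div_eq_one_iff_eq (by positivity)]
    nlinarith [norm_nonneg u]
  rw [eAdd_self hu.le, ← sub_eq_zero, show k • u - u = (k - 1) • u by rw [sub_smul, one_smul],
    smul_eq_zero, or_iff_right hk]

theorem eAdd_smul_smul {e : EuclideanSpace ℝ (Fin n)} (he : ‖e‖ = 1) {a : ℝ} (ha : |a| ≤ 1)
    (b : ℝ) : eAdd (a • e) (b • e) = ((a + b) / (1 + a * b)) • e := by
  rcases eq_or_ne a 0 with rfl | ha0
  · simp [eAdd_zero_left]
  have hae : ‖a • e‖ = |a| := by rw [norm_smul, he, Real.norm_eq_abs, mul_one]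
  rw [show b • e = (b / a) • a • e by rw [smul_smul, div_mul_cancel₀ _ ha0],
    eAdd_smul_self (hae ▸ ha), hae, sq_abs, smul_smul]
  congr 1
  field_simp

theorem eAdd_tanh_smul_tanh_smul {e : EuclideanSpace ℝ (Fin n)} (he : ‖e‖ = 1) (r s : ℝ) :
    eAdd (Real.tanh r • e) (Real.tanh s • e) = Real.tanh (r + s) • e := by
  rw [eAdd_smul_smul he (Real.abs_tanh_lt_one r).le, Real.tanh_add]

end EinsteinAddition

theorem AddSubgroup.eq_top_of_isClosed_of_two_mul_mem {K : AddSubgroup ℝ}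
    (hK : IsClosed (K : Set ℝ)) {a : ℝ} (ha0 : a ≠ 0) (ha : a ∈ K)
    (hhalf : ∀ r, 2 * r ∈ K → r ∈ K) : K = ⊤ := by
  have hdyadic : ∀ m : ℕ, |a| / 2 ^ m ∈ K := by
    intro m
    induction m with
    | zero => simpa using abs_mem_iff.2 ha
    | succ m ih => exact hhalf _ (by rwa [pow_succ, ← div_div, mul_div_cancel₀ _ two_ne_zero])
  have hdense : Dense (K : Set ℝ) := K.dense_of_not_isolated_zero fun ε hε => by
    obtain ⟨m, hm⟩ := exists_pow_lt_of_lt_one (div_pos hε (abs_pos.2 ha0)) one_half_lt_one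
    refine ⟨_, hdyadic m, by positivity, ?_⟩
    rwa [one_div_pow, lt_div_iff₀ (abs_pos.2 ha0), one_div_mul_eq_div] at hm
  rw [← AddSubgroup.coe_eq_univ, ← hK.closure_eq, hdense.closure_eq]

theorem eq_zero_of_eAdd_hom {n : ℕ} {w : ℝ → EuclideanSpace ℝ (Fin n)} (hw : Continuous w)
    (hball : ∀ r, ‖w r‖ < 1) (hadd : ∀ r s, w (r + s) = eAdd (w r) (w s)) {a : ℝ} (ha0 : a ≠ 0)
    (ha : w a = 0) (r : ℝ) : w r = 0 := by
  have hw0 : w 0 = 0 := (eAdd_self_eq_self_iff (hball 0)).1 (by rw [← hadd, add_zero])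
  let K : AddSubgroup ℝ :=
    { carrier := {r | w r = 0}
      zero_mem' := hw0
      add_mem' := fun {r s} (hr : w r = 0) (hs : w s = 0) => by
        show w (r + s) = 0
        rw [hadd, hr, hs, eAdd_zero_left]
      neg_mem' := fun {r} (hr : w r = 0) => by
        show w (-r) = 0
        rw [← eAdd_zero_left (w (-r)), ← hr, ← hadd, add_neg_cancel, hw0, hr] }
  have hhalf : ∀ r, 2 * r ∈ K → r ∈ K := fun r (hr : w (2 * r) = 0) =>
    (eAdd_self_eq_zero_iff (hball r).le).1 (by rwa [← hadd, ← two_mul])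
  have hK : K = ⊤ :=
    AddSubgroup.eq_top_of_isClosed_of_two_mul_mem (isClosed_eq hw continuous_const) ha0 ha hhalf
  exact show r ∈ K from hK ▸ AddSubgroup.mem_top r

theorem stmt_13 {n : ℕ} (f : EuclideanSpace ℝ (Fin n) → EuclideanSpace ℝ (Fin n))
    (hmaps : Set.MapsTo f (eBall n) (eBall n))
    (hcont : ContinuousOn f (eBall n))
    (hhom : ∀ u ∈ eBall n, ∀ v ∈ eBall n, f (eAdd u v) = eAdd (f u) (f v))
    (x : EuclideanSpace ℝ (Fin n)) (hx : x ∈ eBall n) (hx0 : x ≠ 0) (hfx : f x = 0) :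
    ∀ s ∈ Set.Ioo (-1 : ℝ) 1, f ((s * ‖x‖⁻¹) • x) = 0 := by
  intro s hs
  have hxp : 0 < ‖x‖ := norm_pos_iff.2 hx0
  have hx1 : ‖x‖ ∈ Set.Ioo (-1 : ℝ) 1 := ⟨by linarith, mem_eBall_iff.1 hx⟩
  set e := ‖x‖⁻¹ • x
  have he : ‖e‖ = 1 := by rw [norm_smul, norm_inv, norm_norm, inv_mul_cancel₀ hxp.ne']
  have hmem (r : ℝ) : Real.tanh r • e ∈ eBall n := by
    rw [mem_eBall_iff, norm_smul, he, mul_one, Real.norm_eq_abs]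
    exact Real.abs_tanh_lt_one r
  have hartanh : Real.artanh ‖x‖ ≠ 0 := fun h => hxp.ne' <| by
    rw [← Real.tanh_artanh hx1, h, Real.tanh_zero]
  have key := eq_zero_of_eAdd_hom (w := fun r => f (Real.tanh r • e))
    (hcont.comp_continuous (Real.continuous_tanh.smul continuous_const) hmem)
    (fun r => mem_eBall_iff.1 (hmaps (hmem r)))
    (fun r s => by rw [← eAdd_tanh_smul_tanh_smul he, hhom _ (hmem r) _ (hmem s)])
    hartanh (by rwa [Real.tanh_artanh hx1, smul_inv_smul₀ hxp.ne']) (Real.artanh s)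
  rwa [Real.tanh_artanh hs, smul_smul] at key
end

section
/- For n ≥ 2, every automorphism of the Einstein gyrogroup (B^n, ⊕) is continuous (indeed, the restriction of a linear isometry of ℝⁿ). -/
open Set
open scoped RealInnerProductSpace

section CauchyEquation

variable {g : ℝ → ℝ}

lemma map_ratCast_of_add_nonneg (hadd : ∀ p q, 0 ≤ p → 0 ≤ q → g (p + q) = g p + g q)
    {q : ℚ} (hq : 0 ≤ q) : g q = q * g 1 := by
  let G : NNReal →+ ℝ :=
    { toFun := fun x => g x
      map_zero' := by simpa using hadd 0 0 le_rfl le_rfl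
      map_add' := fun x y => hadd x y x.2 y.2 }
  have h := map_nnratCast_smul G NNReal ℝ q.toNNRat 1
  rw [smul_eq_mul, mul_one, smul_eq_mul] at h
  change g _ = _ * g 1 at h
  rw [← Rat.coe_toNNRat q hq]
  exact_mod_cast h

lemma monotoneOn_of_add_of_nonneg (hadd : ∀ p q, 0 ≤ p → 0 ≤ q → g (p + q) = g p + g q)
    (hnonneg : ∀ p, 0 ≤ p → 0 ≤ g p) : MonotoneOn g (Ici 0) := by
  intro p hp q _ hpq
  have := hadd p (q - p) hp (sub_nonneg.2 hpq)
  rw [add_sub_cancel] at this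
  linarith [hnonneg (q - p) (sub_nonneg.2 hpq)]

lemma MonotoneOn.eq_self_of_ratCast (hmono : MonotoneOn g (Ici 0))
    (hrat : ∀ q : ℚ, 0 ≤ q → g q = q) {x : ℝ} (hx : 0 ≤ x) : g x = x := by
  have hq : ∀ q : ℚ, (0 : ℝ) ≤ q → g q = q := fun q h => hrat q (by exact_mod_cast h)
  apply le_antisymm
  · refine le_of_forall_lt_rat_imp_le fun q hxq => ?_
    have hq0 : (0 : ℝ) ≤ q := hx.trans hxq.le
    exact (hmono hx hq0 hxq.le).trans (hq q hq0).le
  · refine le_of_forall_rat_lt_imp_le fun q hqx => ?_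
    rcases le_or_gt (q : ℝ) 0 with hq0 | hq0
    · have h0 : g 0 = 0 := by simpa using hrat 0 le_rfl
      exact hq0.trans (h0 ▸ hmono (mem_Ici.2 le_rfl) hx hx)
    · exact (hq q hq0.le).ge.trans (hmono hq0.le hx hqx.le)

lemma eq_self_of_add_of_nonneg (hadd : ∀ p q, 0 ≤ p → 0 ≤ q → g (p + q) = g p + g q)
    (hnonneg : ∀ p, 0 ≤ p → 0 ≤ g p) (hone : g 1 = 1) {x : ℝ} (hx : 0 ≤ x) : g x = x :=
  (monotoneOn_of_add_of_nonneg hadd hnonneg).eq_self_of_ratCast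
    (fun q hq => by rw [map_ratCast_of_add_nonneg hadd hq, hone, mul_one]) hx

end CauchyEquation

namespace EinsteinGyrogroup

variable {n : ℕ}

local notation "E" => EuclideanSpace ℝ (Fin n)

lemma mem_eBall {u : E} : u ∈ eBall n ↔ ‖u‖ < 1 := mem_ball_zero_iff

lemma one_sub_norm_sq_pos {u : E} (hu : ‖u‖ < 1) : 0 < 1 - ‖u‖ ^ 2 := by
  nlinarith [norm_nonneg u]

lemma one_add_inner_pos {u v : E} (hu : ‖u‖ < 1) (hv : ‖v‖ < 1) : 0 < 1 + ⟪u, v⟫ := by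
  nlinarith [neg_le_of_abs_le (abs_real_inner_le_norm u v), norm_nonneg u, norm_nonneg v]

lemma norm_add_smul_sq (u v : E) (a b : ℝ) :
    ‖a • u + b • v‖ ^ 2 = a ^ 2 * ‖u‖ ^ 2 + 2 * a * b * ⟪u, v⟫ + b ^ 2 * ‖v‖ ^ 2 := by
  rw [norm_add_sq_real, norm_smul, norm_smul, real_inner_smul_left, real_inner_smul_right]
  simp only [Real.norm_eq_abs, mul_pow, sq_abs]
  ring

lemma exists_orthogonal_norm_sq_eq (hn : 2 ≤ n) {a b : ℝ} (ha : 0 ≤ a) (hb : 0 ≤ b) :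
    ∃ x y : E, ‖x‖ ^ 2 = a ∧ ‖y‖ ^ 2 = b ∧ ⟪x, y⟫ = 0 := by
  refine ⟨√a • EuclideanSpace.single ⟨0, by omega⟩ 1, √b • EuclideanSpace.single ⟨1, by omega⟩ 1,
    ?_, ?_, ?_⟩
  · simp [norm_smul, Real.sq_sqrt ha]
  · simp [norm_smul, Real.sq_sqrt hb]
  · simp [real_inner_smul_left, real_inner_smul_right, EuclideanSpace.inner_single_left]

lemma norm_smul_add_sq_of_inner_eq_zero {y w : E} (hyw : ⟪y, w⟫ = 0) (c : ℝ) :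
    ‖c • y + w‖ ^ 2 = c ^ 2 * ‖y‖ ^ 2 + ‖w‖ ^ 2 := by
  rw [norm_add_sq_real, real_inner_smul_left, hyw, norm_smul, Real.norm_eq_abs, mul_pow, sq_abs]
  ring

lemma eq_of_norm_smul_add_eq {y w : E} {a b : ℝ} (hy : y ≠ 0) (hyw : ⟪y, w⟫ = 0) (ha : 0 ≤ a)
    (hb : 0 ≤ b) (h : ‖a • y + w‖ = ‖b • y + w‖) : a = b := by
  have h2 := congrArg (· ^ 2) h
  simp only [norm_smul_add_sq_of_inner_eq_zero hyw] at h2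
  have : a ^ 2 = b ^ 2 := by
    have := pow_pos (norm_pos_iff.2 hy) 2
    nlinarith
  exact (pow_left_inj₀ ha hb two_ne_zero).1 this

section EinsteinAddition

lemma eAdd_eq (u v : E) :
    eAdd u v = ((1 + √(1 - ‖u‖ ^ 2) + ⟪u, v⟫) / ((1 + ⟪u, v⟫) * (1 + √(1 - ‖u‖ ^ 2)))) • u
      + (√(1 - ‖u‖ ^ 2) / (1 + ⟪u, v⟫)) • v := by
  have : 1 + √(1 - ‖u‖ ^ 2) ≠ 0 := by positivity
  unfold eAdd
  match_scalars <;> field_simp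

lemma eAdd_zero_left (v : E) : eAdd 0 v = v := by simp [eAdd]

lemma eAdd_zero_right (u : E) : eAdd u 0 = u := by simp [eAdd]

lemma one_sub_norm_eAdd_sq {u v : E} (hu : ‖u‖ < 1) (hv : ‖v‖ < 1) :
    (1 - ‖eAdd u v‖ ^ 2) * (1 + ⟪u, v⟫) ^ 2 = (1 - ‖u‖ ^ 2) * (1 - ‖v‖ ^ 2) := by
  have hs := Real.sq_sqrt (one_sub_norm_sq_pos hu).le
  have hs0 := Real.sqrt_nonneg (1 - ‖u‖ ^ 2)
  have hd := (one_add_inner_pos hu hv).ne'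
  rw [eAdd_eq, norm_add_smul_sq]
  set s := √(1 - ‖u‖ ^ 2)
  have : 1 + s ≠ 0 := by positivity
  field_simp
  rw [show ‖u‖ ^ 2 = 1 - s ^ 2 by linarith]
  ring

lemma norm_eAdd_lt_one {u v : E} (hu : ‖u‖ < 1) (hv : ‖v‖ < 1) : ‖eAdd u v‖ < 1 := by
  have hpos : 0 < (1 - ‖eAdd u v‖ ^ 2) * (1 + ⟪u, v⟫) ^ 2 := by
    rw [one_sub_norm_eAdd_sq hu hv]
    exact mul_pos (one_sub_norm_sq_pos hu) (one_sub_norm_sq_pos hv)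
  have := pos_of_mul_pos_left hpos (sq_nonneg _)
  nlinarith [norm_nonneg (eAdd u v)]

lemma eAdd_mem_eBall {u v : E} (hu : u ∈ eBall n) (hv : v ∈ eBall n) : eAdd u v ∈ eBall n :=
  mem_eBall.2 (norm_eAdd_lt_one (mem_eBall.1 hu) (mem_eBall.1 hv))

lemma eAdd_neg_self {u : E} (hu : ‖u‖ < 1) : eAdd u (-u) = 0 := by
  have hs := Real.sq_sqrt (one_sub_norm_sq_pos hu).le
  have hs0 := Real.sqrt_nonneg (1 - ‖u‖ ^ 2)
  have h1 := (one_sub_norm_sq_pos hu).ne'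
  rw [eAdd_eq, inner_neg_right, real_inner_self_eq_norm_sq]
  set s := √(1 - ‖u‖ ^ 2)
  have : 1 + s ≠ 0 := by positivity
  rw [show ‖u‖ ^ 2 = 1 - s ^ 2 by linarith] at h1 ⊢
  match_scalars
  field_simp
  ring

lemma eq_neg_of_eAdd_eq_zero {u w : E} (hu : ‖u‖ < 1) (hw : ‖w‖ < 1) (h : eAdd u w = 0) :
    w = -u := by
  obtain ⟨μ, rfl⟩ : ∃ μ : ℝ, w = μ • u := by
    rw [eAdd_eq] at h
    set A := (1 + √(1 - ‖u‖ ^ 2) + ⟪u, w⟫) / ((1 + ⟪u, w⟫) * (1 + √(1 - ‖u‖ ^ 2)))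
    set B := √(1 - ‖u‖ ^ 2) / (1 + ⟪u, w⟫)
    have hB : B ≠ 0 := (div_pos (Real.sqrt_pos.2 (one_sub_norm_sq_pos hu))
      (one_add_inner_pos hu hw)).ne'
    refine ⟨-(A / B), smul_right_injective E hB ?_⟩
    simp only
    rw [smul_smul, mul_neg, mul_div_cancel₀ _ hB, neg_smul]
    exact eq_neg_of_add_eq_zero_right h
  -- `u ⊕ μu = 0` forces `(1 + μ‖u‖²)² = (1 - ‖u‖²)(1 - μ²‖u‖²)`, i.e. `‖u‖²(1 + μ)² = 0`
  have key := one_sub_norm_eAdd_sq hu hw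
  rw [h, norm_zero, real_inner_smul_right, real_inner_self_eq_norm_sq, norm_smul,
    Real.norm_eq_abs, mul_pow, sq_abs] at key
  have : ‖u‖ ^ 2 * (μ + 1) ^ 2 = 0 := by linear_combination key
  rcases mul_eq_zero.1 this with h0 | h0
  · simp [norm_eq_zero.1 (pow_eq_zero_iff two_ne_zero |>.1 h0)]
  · rw [show μ = -1 by linear_combination pow_eq_zero_iff two_ne_zero |>.1 h0, neg_one_smul]

end EinsteinAddition

section LorentzFactor

noncomputable def lorentzFactor (w : E) : ℝ := (√(1 - ‖w‖ ^ 2))⁻¹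

lemma lorentzFactor_sq {w : E} (hw : ‖w‖ < 1) : lorentzFactor w ^ 2 = (1 - ‖w‖ ^ 2)⁻¹ := by
  rw [lorentzFactor, inv_pow, Real.sq_sqrt (one_sub_norm_sq_pos hw).le]

lemma lorentzFactor_nonneg (w : E) : 0 ≤ lorentzFactor w := inv_nonneg.2 (Real.sqrt_nonneg _)

lemma one_le_lorentzFactor {w : E} (hw : ‖w‖ < 1) : 1 ≤ lorentzFactor w := by
  refine one_le_inv₀ (Real.sqrt_pos.2 (one_sub_norm_sq_pos hw)) |>.2 ?_
  exact Real.sqrt_le_one.2 (by nlinarith [norm_nonneg w])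

@[simp] lemma lorentzFactor_zero : lorentzFactor (0 : E) = 1 := by simp [lorentzFactor]

@[simp] lemma lorentzFactor_neg (w : E) : lorentzFactor (-w) = lorentzFactor w := by
  simp [lorentzFactor]

lemma lorentzFactor_eq_iff {w w' : E} (hw : ‖w‖ < 1) (hw' : ‖w'‖ < 1) :
    lorentzFactor w = lorentzFactor w' ↔ ‖w‖ = ‖w'‖ := by
  refine ⟨fun h => ?_, fun h => by rw [lorentzFactor, lorentzFactor, h]⟩
  have h2 := congrArg (· ^ 2) h
  simp only [lorentzFactor_sq hw, lorentzFactor_sq hw', inv_inj, sub_right_inj] at h2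
  exact (pow_left_inj₀ (norm_nonneg w) (norm_nonneg w') two_ne_zero).1 h2

lemma lorentzFactor_eq_one_iff {w : E} (hw : ‖w‖ < 1) : lorentzFactor w = 1 ↔ w = 0 := by
  rw [← lorentzFactor_zero (n := n), lorentzFactor_eq_iff hw (by simp), norm_zero, norm_eq_zero]

lemma exists_lorentzFactor_eq (hn : 0 < n) {t : ℝ} (ht : 1 ≤ t) :
    ∃ w ∈ eBall n, lorentzFactor w = t := by
  have ht0 : 0 < t := zero_lt_one.trans_le ht
  have hs : 0 ≤ 1 - (t ^ 2)⁻¹ := sub_nonneg.2 (inv_le_one_of_one_le₀ (one_le_pow₀ ht))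
  set w : E := √(1 - (t ^ 2)⁻¹) • EuclideanSpace.single ⟨0, hn⟩ 1
  have hw : ‖w‖ ^ 2 = 1 - (t ^ 2)⁻¹ := by simp [w, norm_smul, Real.sq_sqrt hs]
  have hw1 : ‖w‖ < 1 := by
    have : 0 < (t ^ 2)⁻¹ := by positivity
    nlinarith [norm_nonneg w]
  refine ⟨w, mem_eBall.2 hw1, ?_⟩
  rw [← sq_eq_sq₀ (lorentzFactor_nonneg w) ht0.le, lorentzFactor_sq hw1, hw, sub_sub_cancel,
    inv_inv]

lemma lorentzFactor_eAdd {u v : E} (hu : ‖u‖ < 1) (hv : ‖v‖ < 1) :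
    lorentzFactor (eAdd u v) = lorentzFactor u * lorentzFactor v * (1 + ⟪u, v⟫) := by
  have hd := one_add_inner_pos hu hv
  have hγu := lorentzFactor_nonneg u
  have hγv := lorentzFactor_nonneg v
  rw [← sq_eq_sq₀ (lorentzFactor_nonneg _) (by positivity), mul_pow, mul_pow,
    lorentzFactor_sq (norm_eAdd_lt_one hu hv), lorentzFactor_sq hu, lorentzFactor_sq hv,
    ← mul_inv, ← one_sub_norm_eAdd_sq hu hv]
  have := (one_sub_norm_sq_pos (norm_eAdd_lt_one hu hv)).ne'
  field_simp

lemma lorentzFactor_eAdd_of_norm_eq {u v : E} (hu : ‖u‖ < 1) (hvu : ‖v‖ = ‖u‖) :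
    lorentzFactor (eAdd u v) = (1 + ⟪u, v⟫) / (1 - ‖u‖ ^ 2) := by
  have hγ : lorentzFactor v = lorentzFactor u := (lorentzFactor_eq_iff (hvu ▸ hu) hu).2 hvu
  rw [lorentzFactor_eAdd hu (hvu ▸ hu), hγ, ← sq, lorentzFactor_sq hu, div_eq_inv_mul]

lemma lorentzFactor_eAdd_self {w : E} (hw : ‖w‖ < 1) :
    lorentzFactor (eAdd w w) = 2 * lorentzFactor w ^ 2 - 1 := by
  rw [lorentzFactor_eAdd_of_norm_eq hw rfl, real_inner_self_eq_norm_sq, lorentzFactor_sq hw]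
  have := (one_sub_norm_sq_pos hw).ne'
  field_simp
  ring

lemma exists_lorentzFactor_eAdd_eq (hn : 2 ≤ n) {p q : ℝ} (hp : 0 ≤ p) (hq : 0 ≤ q) :
    ∃ u v : E, ‖u‖ < 1 ∧ ‖v‖ = ‖u‖ ∧ lorentzFactor (eAdd u v) = 1 + p ∧
      lorentzFactor (eAdd u (-v)) = 1 + q ∧ lorentzFactor (eAdd u u) = 1 + (p + q) := by
  have hs : 0 < 2 + p + q := by linarith
  obtain ⟨x, y, hx, hy, hxy⟩ :=
    exists_orthogonal_norm_sq_eq (n := n) hn (div_nonneg hp hs.le) (div_nonneg hq hs.le)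
  have hyx : ⟪y, x⟫ = 0 := by rw [real_inner_comm, hxy]
  have hu2 : ‖x + y‖ ^ 2 = (p + q) / (2 + p + q) := by
    rw [norm_add_sq_real, hxy, hx, hy]; ring
  have hvu : ‖x - y‖ = ‖x + y‖ := by
    rw [← sq_eq_sq₀ (norm_nonneg _) (norm_nonneg _), hu2, norm_sub_sq_real, hxy, hx, hy]; ring
  have hinner : ⟪x + y, x - y⟫ = (p - q) / (2 + p + q) := by
    rw [inner_add_left, inner_sub_right, inner_sub_right, hxy, hyx, real_inner_self_eq_norm_sq,
      real_inner_self_eq_norm_sq, hx, hy]; ring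
  have hu : ‖x + y‖ < 1 := by
    rw [← sq_lt_one_iff₀ (norm_nonneg _), hu2, div_lt_one hs]; linarith
  refine ⟨x + y, x - y, hu, hvu, ?_, ?_, ?_⟩
  · rw [lorentzFactor_eAdd_of_norm_eq hu hvu, hinner, hu2]
    field_simp; ring
  · rw [lorentzFactor_eAdd_of_norm_eq hu (by rw [norm_neg, hvu]), inner_neg_right, hinner, hu2]
    field_simp; ring
  · rw [lorentzFactor_eAdd_of_norm_eq hu rfl, real_inner_self_eq_norm_sq, hu2]
    field_simp; ring

lemma norm_eAdd_comm {u v : E} (hu : ‖u‖ < 1) (hv : ‖v‖ < 1) : ‖eAdd u v‖ = ‖eAdd v u‖ := by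
  rw [← lorentzFactor_eq_iff (norm_eAdd_lt_one hu hv) (norm_eAdd_lt_one hv hu),
    lorentzFactor_eAdd hu hv, lorentzFactor_eAdd hv hu, real_inner_comm]
  ring

end LorentzFactor

section Swap

variable {y e : EuclideanSpace ℝ (Fin n)} {t : ℝ}

lemma eAdd_neg_smul_smul_add_smul (he : ‖e‖ = 1) (hye : ⟪y, e⟫ = 0) (ht0 : 0 ≤ t)
    (ht1 : t < 1) :
    eAdd (-t • e) (√(1 - t ^ 2) • y + t • e) = y := by
  have hc := Real.sq_sqrt (show 0 ≤ 1 - t ^ 2 by nlinarith)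
  have hc0 := Real.sqrt_nonneg (1 - t ^ 2)
  have hnu : ‖-t • e‖ ^ 2 = t ^ 2 := by simp [norm_smul, he]
  have hinner : ⟪-t • e, √(1 - t ^ 2) • y + t • e⟫ = -t ^ 2 := by
    rw [inner_add_right, real_inner_smul_left, real_inner_smul_right, real_inner_smul_left,
      real_inner_smul_right, real_inner_comm, hye, real_inner_self_eq_norm_sq, he]
    ring
  rw [eAdd_eq, hnu, hinner]
  set c := √(1 - t ^ 2)
  have : 1 + c ≠ 0 := by positivity
  have : 1 + -t ^ 2 ≠ 0 := by nlinarith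
  match_scalars
  · field_simp; linear_combination t * hc
  · field_simp; linear_combination hc

lemma eAdd_smul_add_smul_neg_smul (hy : ‖y‖ < 1) (he : ‖e‖ = 1) (hye : ⟪y, e⟫ = 0)
    (ht0 : 0 ≤ t) (ht1 : t < 1) :
    ∃ α : ℝ, 0 < α ∧ eAdd (√(1 - t ^ 2) • y + t • e) (-t • e) =
      α • y + (t * ‖y‖ ^ 2 / (1 + √(1 - t ^ 2) * √(1 - ‖y‖ ^ 2))) • e := by
  have hc := Real.sq_sqrt (show 0 ≤ 1 - t ^ 2 by nlinarith)
  have hc0 := Real.sqrt_pos.2 (show 0 < 1 - t ^ 2 by nlinarith)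
  have hσ := Real.sq_sqrt (one_sub_norm_sq_pos hy).le
  have hσ0 := Real.sqrt_nonneg (1 - ‖y‖ ^ 2)
  set c := √(1 - t ^ 2)
  set σ := √(1 - ‖y‖ ^ 2)
  have hnv : √(1 - ‖c • y + t • e‖ ^ 2) = c * σ := by
    rw [norm_add_smul_sq, hye, he, ← Real.sqrt_sq (by positivity : 0 ≤ c * σ)]
    congr 1
    linear_combination -hc - c ^ 2 * hσ
  have hinner : ⟪c • y + t • e, -t • e⟫ = -t ^ 2 := by
    rw [inner_add_left, real_inner_smul_left, real_inner_smul_right, real_inner_smul_left,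
      real_inner_smul_right, hye, real_inner_self_eq_norm_sq, he]
    ring
  have h1 : 1 + c * σ ≠ 0 := by positivity
  have h2 : 1 + -t ^ 2 ≠ 0 := by nlinarith
  have h3 : 1 - t ^ 2 ≠ 0 := by nlinarith
  refine ⟨c * (1 + c * σ - t ^ 2) / ((1 - t ^ 2) * (1 + c * σ)), ?_, ?_⟩
  · have : 0 < 1 - t ^ 2 := by nlinarith
    have : 0 < 1 + c * σ - t ^ 2 := by nlinarith [mul_nonneg hc0.le hσ0]
    positivity
  rw [eAdd_eq, hnv, hinner]
  match_scalars
  · field_simp; ring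
  · field_simp; linear_combination (-t * σ ^ 2) * hc - t * (1 - t ^ 2) * hσ

lemma exists_mul_div_one_add_eq {a b ν : ℝ} (hb : 0 ≤ b) (hν0 : 0 ≤ ν) (hν : ν < a) :
    ∃ t ∈ Ico (0 : ℝ) 1, t * a / (1 + √(1 - t ^ 2) * b) = ν := by
  have hcont : ContinuousOn (fun t : ℝ => t * a / (1 + √(1 - t ^ 2) * b)) (Icc 0 1) := by
    refine ContinuousOn.div (by fun_prop) (by fun_prop) fun t _ => ?_
    positivity
  exact intermediate_value_Ico zero_le_one hcont (by simpa using And.intro hν0 hν)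

lemma exists_eAdd_eq_and_eAdd_swap_eq_of_inner_eq_zero {ν : ℝ} (hy : ‖y‖ < 1) (he : ‖e‖ = 1)
    (hye : ⟪y, e⟫ = 0) (hν0 : 0 ≤ ν) (hν : ν < ‖y‖ ^ 2) :
    ∃ u ∈ eBall n, ∃ v ∈ eBall n, eAdd u v = y ∧ ∃ α : ℝ, 0 < α ∧ eAdd v u = α • y + ν • e := by
  obtain ⟨t, ⟨ht0, ht1⟩, rfl⟩ := exists_mul_div_one_add_eq (Real.sqrt_nonneg (1 - ‖y‖ ^ 2)) hν0 hν
  refine ⟨-t • e, ?_, √(1 - t ^ 2) • y + t • e, ?_, eAdd_neg_smul_smul_add_smul he hye ht0 ht1,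
    eAdd_smul_add_smul_neg_smul hy he hye ht0 ht1⟩
  · rw [mem_eBall, norm_smul, he, mul_one, Real.norm_eq_abs, abs_neg, abs_of_nonneg ht0]
    exact ht1
  · rw [mem_eBall, ← sq_lt_one_iff₀ (norm_nonneg _), norm_add_smul_sq, hye, he,
      Real.sq_sqrt (by nlinarith)]
    have := one_sub_norm_sq_pos hy
    nlinarith [mul_pos (show 0 < 1 - t ^ 2 by nlinarith) this]

lemma exists_eq_smul_add_of_norm_sub_lt {z : E} (hy : ‖y‖ < 1) (hclose : ‖z - y‖ < ‖y‖ ^ 2) :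
    ∃ a : ℝ, 0 < a ∧ ∃ w : E, ⟪y, w⟫ = 0 ∧ ‖w‖ < ‖y‖ ^ 2 ∧ z = a • y + w := by
  have hρ : 0 < ‖y‖ := by nlinarith [norm_nonneg (z - y), norm_nonneg y]
  set a := ⟪y, z⟫ / ‖y‖ ^ 2
  have hyw : ⟪y, z - a • y⟫ = 0 := by
    simp only [a, inner_sub_right, real_inner_smul_right, real_inner_self_eq_norm_sq]
    field_simp
    ring
  have hsq : ‖z - y‖ ^ 2 = (a - 1) ^ 2 * ‖y‖ ^ 2 + ‖z - a • y‖ ^ 2 := by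
    rw [show z - y = (a - 1) • y + (z - a • y) by module, norm_smul_add_sq_of_inner_eq_zero hyw]
  have hclose' : ‖z - y‖ < ‖y‖ := hclose.trans (by nlinarith)
  refine ⟨a, ?_, z - a • y, hyw, ?_, by module⟩
  · have : (a - 1) ^ 2 < 1 := by nlinarith [norm_nonneg (z - a • y), norm_nonneg (z - y)]
    nlinarith
  · nlinarith [norm_nonneg (z - a • y), norm_nonneg (z - y)]

lemma exists_eAdd_eq_and_eAdd_swap_eq {z : E} (hy : ‖y‖ < 1) (hzy : ‖z‖ = ‖y‖)
    (hclose : ‖z - y‖ < ‖y‖ ^ 2) : ∃ u ∈ eBall n, ∃ v ∈ eBall n, eAdd u v = y ∧ eAdd v u = z := by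
  obtain ⟨a, ha, w, hyw, hw, rfl⟩ := exists_eq_smul_add_of_norm_sub_lt hy hclose
  have hy0 : y ≠ 0 := by
    rintro rfl
    exact (norm_nonneg w).not_gt (by simpa using hw)
  rcases eq_or_ne w 0 with rfl | hw0
  · have ha1 : a = 1 := eq_of_norm_smul_add_eq hy0 hyw ha.le zero_le_one (by rw [hzy, one_smul, add_zero])
    refine ⟨0, mem_eBall.2 (by simp), y, mem_eBall.2 hy, eAdd_zero_left y, ?_⟩
    rw [eAdd_zero_right, ha1, one_smul, add_zero]
  obtain ⟨u, hu, v, hv, huv, α, hα, hvu⟩ :=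
    exists_eAdd_eq_and_eAdd_swap_eq_of_inner_eq_zero (e := ‖w‖⁻¹ • w) hy
      (by rw [norm_smul, norm_inv, norm_norm, inv_mul_cancel₀ (norm_ne_zero_iff.2 hw0)])
      (by rw [real_inner_smul_right, hyw, mul_zero]) (norm_nonneg w) hw
  rw [smul_smul, mul_inv_cancel₀ (norm_ne_zero_iff.2 hw0), one_smul] at hvu
  refine ⟨u, hu, v, hv, huv, ?_⟩
  have hαa : α = a := eq_of_norm_smul_add_eq hy0 hyw hα.le ha.le (by
    rw [← hvu, hzy, norm_eAdd_comm (mem_eBall.1 hv) (mem_eBall.1 hu), huv])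
  rw [hvu, hαa]

end Swap

structure IsEinsteinHom (f : E → E) : Prop where
  mapsTo : MapsTo f (eBall n) (eBall n)
  map_eAdd : ∀ u ∈ eBall n, ∀ v ∈ eBall n, f (eAdd u v) = eAdd (f u) (f v)

namespace IsEinsteinHom

lemma norm_map_lt_one {f : E → E} (hf : IsEinsteinHom f) {w : E} (hw : w ∈ eBall n) :
    ‖f w‖ < 1 :=
  mem_eBall.1 (hf.mapsTo hw)

lemma lorentzFactor_map_eAdd {f : E → E} (hf : IsEinsteinHom f) {u v : E} (hu : u ∈ eBall n)
    (hv : v ∈ eBall n) :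
    lorentzFactor (f (eAdd u v)) = lorentzFactor (f u) * lorentzFactor (f v) * (1 + ⟪f u, f v⟫) := by
  rw [hf.map_eAdd u hu v hv, lorentzFactor_eAdd (hf.norm_map_lt_one hu) (hf.norm_map_lt_one hv)]

lemma map_zero {f : E → E} (hf : IsEinsteinHom f) : f 0 = 0 := by
  have h0 : (0 : E) ∈ eBall n := mem_eBall.2 (by simp)
  have h := hf.lorentzFactor_map_eAdd h0 h0
  rw [eAdd_zero_left, real_inner_self_eq_norm_sq] at h
  have hγ := one_le_lorentzFactor (hf.norm_map_lt_one h0)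
  have h1 : lorentzFactor (f 0) * (1 + ‖f 0‖ ^ 2) = 1 :=
    mul_left_cancel₀ (zero_lt_one.trans_le hγ).ne' (by linear_combination -h)
  have : ‖f 0‖ ^ 2 = 0 := by nlinarith [sq_nonneg ‖f 0‖]
  simpa using this

lemma map_neg {f : E → E} (hf : IsEinsteinHom f) {w : E} (hw : w ∈ eBall n) :
    f (-w) = -f w := by
  have hw' : -w ∈ eBall n := by simpa [mem_eBall] using hw
  have h := hf.map_eAdd w hw (-w) hw'
  rw [eAdd_neg_self (mem_eBall.1 hw), hf.map_zero] at h
  exact eq_neg_of_eAdd_eq_zero (hf.norm_map_lt_one hw) (hf.norm_map_lt_one hw') h.symm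

lemma lorentzFactor_map_eAdd_add_map_eAdd_neg {f : E → E} (hf : IsEinsteinHom f) {u v : E}
    (hu : u ∈ eBall n) (hv : v ∈ eBall n) :
    lorentzFactor (f (eAdd u v)) + lorentzFactor (f (eAdd u (-v))) =
      2 * lorentzFactor (f u) * lorentzFactor (f v) := by
  have hv' : -v ∈ eBall n := by simpa [mem_eBall] using hv
  rw [hf.lorentzFactor_map_eAdd hu hv, hf.lorentzFactor_map_eAdd hu hv', hf.map_neg hv,
    lorentzFactor_neg, inner_neg_right]
  ring

lemma norm_map_eAdd_comm {f : E → E} (hf : IsEinsteinHom f) {u v : E} (hu : u ∈ eBall n)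
    (hv : v ∈ eBall n) : ‖f (eAdd u v)‖ = ‖f (eAdd v u)‖ := by
  rw [hf.map_eAdd u hu v hv, hf.map_eAdd v hv u hu]
  exact norm_eAdd_comm (hf.norm_map_lt_one hu) (hf.norm_map_lt_one hv)

lemma norm_map_eq_of_norm_sub_lt {f : E → E} (hf : IsEinsteinHom f) {y z : E} (hy : ‖y‖ < 1)
    (hzy : ‖z‖ = ‖y‖) (hclose : ‖z - y‖ < ‖y‖ ^ 2) : ‖f z‖ = ‖f y‖ := by
  obtain ⟨u, hu, v, hv, rfl, rfl⟩ := exists_eAdd_eq_and_eAdd_swap_eq hy hzy hclose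
  exact hf.norm_map_eAdd_comm hv hu

lemma norm_map_eq_of_norm_eq {f : E → E} (hf : IsEinsteinHom f) (hn : 2 ≤ n) {w w' : E}
    (hw : ‖w‖ < 1) (hw' : ‖w'‖ = ‖w‖) : ‖f w'‖ = ‖f w‖ := by
  rcases (norm_nonneg w).eq_or_lt with h0 | hρ
  · rw [norm_eq_zero.1 h0.symm, norm_eq_zero.1 (hw'.trans h0.symm)]
  have hrank : 1 < Module.rank ℝ E := by
    rw [← Module.finrank_eq_rank, finrank_euclideanSpace_fin]
    exact_mod_cast hn
  refine (isPreconnected_sphere hrank 0 ‖w‖).induction₂ (fun a b => ‖f b‖ = ‖f a‖)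
    (fun x hx => ?_) (fun _ _ _ _ _ _ h h' => h'.trans h) (fun _ _ _ _ h => h.symm)
    (mem_sphere_zero_iff_norm.2 rfl) (mem_sphere_zero_iff_norm.2 hw')
  rw [mem_sphere_zero_iff_norm] at hx
  filter_upwards [self_mem_nhdsWithin,
    nhdsWithin_le_nhds (Metric.ball_mem_nhds x (by positivity : 0 < ‖w‖ ^ 2))] with z hz hzx
  rw [mem_sphere_zero_iff_norm] at hz
  rw [Metric.mem_ball, dist_eq_norm, ← hx] at hzx
  exact hf.norm_map_eq_of_norm_sub_lt (hx ▸ hw) (hz.trans hx.symm) hzx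

lemma exists_lorentzFactor_map_eq_comp {f : E → E} (hf : IsEinsteinHom f) (hn : 2 ≤ n) :
    ∃ φ : ℝ → ℝ, ∀ w ∈ eBall n, lorentzFactor (f w) = φ (lorentzFactor w) := by
  refine ⟨fun t => lorentzFactor (f (Classical.epsilon fun w => w ∈ eBall n ∧ lorentzFactor w = t)),
    fun w hw => ?_⟩
  obtain ⟨hw', hγ⟩ := Classical.epsilon_spec
    (p := fun w' => w' ∈ eBall n ∧ lorentzFactor w' = lorentzFactor w) ⟨w, hw, rfl⟩
  refine (lorentzFactor_eq_iff (hf.norm_map_lt_one hw) (hf.norm_map_lt_one hw')).2 ?_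
  exact (hf.norm_map_eq_of_norm_eq hn (mem_eBall.1 hw)
    ((lorentzFactor_eq_iff (mem_eBall.1 hw') (mem_eBall.1 hw)).1 hγ)).symm

section Profile

variable {f : EuclideanSpace ℝ (Fin n) → EuclideanSpace ℝ (Fin n)} {φ : ℝ → ℝ}

lemma profile_add (hf : IsEinsteinHom f) (hn : 2 ≤ n)
    (hφ : ∀ w ∈ eBall n, lorentzFactor (f w) = φ (lorentzFactor w)) {p q : ℝ} (hp : 0 ≤ p)
    (hq : 0 ≤ q) : φ (1 + (p + q)) + 1 = φ (1 + p) + φ (1 + q) := by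
  obtain ⟨u, v, hu, hvu, hγp, hγq, hγpq⟩ := exists_lorentzFactor_eAdd_eq hn hp hq
  have hu' := mem_eBall.2 hu
  have hv' : v ∈ eBall n := mem_eBall.2 (hvu ▸ hu)
  have hnv' : -v ∈ eBall n := by simpa [mem_eBall] using hv'
  have hpair := hf.lorentzFactor_map_eAdd_add_map_eAdd_neg hu' hv'
  have hpair' := hf.lorentzFactor_map_eAdd_add_map_eAdd_neg hu' hu'
  rw [eAdd_neg_self hu, hf.map_zero, lorentzFactor_zero, hφ _ (eAdd_mem_eBall hu' hu'),
    hγpq] at hpair'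
  rw [hφ _ (eAdd_mem_eBall hu' hv'), hφ _ (eAdd_mem_eBall hu' hnv'), hγp, hγq,
    (lorentzFactor_eq_iff (hf.norm_map_lt_one hv') (hf.norm_map_lt_one hu')).2
      (hf.norm_map_eq_of_norm_eq hn hu hvu)] at hpair
  linarith

lemma one_le_profile (hf : IsEinsteinHom f) (hn : 0 < n)
    (hφ : ∀ w ∈ eBall n, lorentzFactor (f w) = φ (lorentzFactor w)) {t : ℝ} (ht : 1 ≤ t) :
    1 ≤ φ t := by
  obtain ⟨w, hw, rfl⟩ := exists_lorentzFactor_eq hn ht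
  exact hφ w hw ▸ one_le_lorentzFactor (hf.norm_map_lt_one hw)

lemma profile_two_mul_sq_sub_one (hf : IsEinsteinHom f) (hn : 0 < n)
    (hφ : ∀ w ∈ eBall n, lorentzFactor (f w) = φ (lorentzFactor w)) {t : ℝ} (ht : 1 ≤ t) :
    φ (2 * t ^ 2 - 1) + 1 = 2 * φ t ^ 2 := by
  obtain ⟨w, hw, rfl⟩ := exists_lorentzFactor_eq hn ht
  have hpair := hf.lorentzFactor_map_eAdd_add_map_eAdd_neg hw hw
  rwa [eAdd_neg_self (mem_eBall.1 hw), hf.map_zero, lorentzFactor_zero, hφ _ (eAdd_mem_eBall hw hw),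
    lorentzFactor_eAdd_self (mem_eBall.1 hw), hφ w hw, mul_assoc, ← sq] at hpair

lemma profile_ne_one (hf : IsEinsteinHom f) (hinj : InjOn f (eBall n)) (hn : 0 < n)
    (hφ : ∀ w ∈ eBall n, lorentzFactor (f w) = φ (lorentzFactor w)) {t : ℝ} (ht : 1 < t) :
    φ t ≠ 1 := by
  obtain ⟨w, hw, rfl⟩ := exists_lorentzFactor_eq hn ht.le
  intro h
  have hfw : f w = f 0 := by
    rw [hf.map_zero, ← lorentzFactor_eq_one_iff (hf.norm_map_lt_one hw), hφ w hw, h]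
  rw [(lorentzFactor_eq_one_iff (mem_eBall.1 hw)).2 (hinj hw (mem_eBall.2 (by simp)) hfw)] at ht
  exact ht.false

end Profile

lemma lorentzFactor_map {f : E → E} (hf : IsEinsteinHom f) (hinj : InjOn f (eBall n))
    (hn : 2 ≤ n) {w : E} (hw : w ∈ eBall n) : lorentzFactor (f w) = lorentzFactor w := by
  obtain ⟨φ, hφ⟩ := hf.exists_lorentzFactor_map_eq_comp hn
  have hn0 : 0 < n := by omega
  set g : ℝ → ℝ := fun p => φ (1 + p) - 1
  have hadd : ∀ p q, 0 ≤ p → 0 ≤ q → g (p + q) = g p + g q := fun p q hp hq => by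
    simp only [g]; linarith [hf.profile_add hn hφ hp hq]
  have hnonneg : ∀ p, 0 ≤ p → 0 ≤ g p := fun p hp => by
    simp only [g]; linarith [hf.one_le_profile hn0 hφ (by linarith : 1 ≤ 1 + p)]
  have hone : g 1 = 1 := by
    have h6 := map_ratCast_of_add_nonneg hadd (q := 6) (by norm_num)
    have h7 := hf.profile_two_mul_sq_sub_one hn0 hφ (t := 2) (by norm_num)
    have h2 := sub_ne_zero.2 (hf.profile_ne_one hinj hn0 hφ (t := 2) (by norm_num))
    simp only [g] at h6 ⊢
    norm_num at h6 h7 ⊢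
    -- `g 6 = 6 g 1` and the double-angle identity at `t = 2` force `φ 2 ∈ {1, 2}`
    have : (φ 2 - 1) * (φ 2 - 2) = 0 := by linear_combination (-1 / 2 : ℝ) * h7 + h6 / 2
    linarith [(mul_eq_zero.1 this).resolve_left h2]
  have hγ := one_le_lorentzFactor (mem_eBall.1 hw)
  have := eq_self_of_add_of_nonneg hadd hnonneg hone (sub_nonneg.2 hγ)
  simp only [g, add_sub_cancel] at this
  rw [hφ w hw]
  linarith

lemma inner_map {f : E → E} (hf : IsEinsteinHom f) (hinj : InjOn f (eBall n)) (hn : 2 ≤ n)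
    {u v : E} (hu : u ∈ eBall n) (hv : v ∈ eBall n) : ⟪f u, f v⟫ = ⟪u, v⟫ := by
  have h := hf.lorentzFactor_map_eAdd hu hv
  rw [hf.lorentzFactor_map hinj hn (eAdd_mem_eBall hu hv), hf.lorentzFactor_map hinj hn hu,
    hf.lorentzFactor_map hinj hn hv, lorentzFactor_eAdd (mem_eBall.1 hu) (mem_eBall.1 hv)] at h
  have hγ : lorentzFactor u * lorentzFactor v ≠ 0 :=
    mul_ne_zero (zero_lt_one.trans_le (one_le_lorentzFactor (mem_eBall.1 hu))).ne'
      (zero_lt_one.trans_le (one_le_lorentzFactor (mem_eBall.1 hv))).ne'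
  linarith [mul_left_cancel₀ hγ h]

end IsEinsteinHom

lemma exists_linearIsometryEquiv_of_inner_map_eq {f : E → E}
    (hinner : ∀ u ∈ eBall n, ∀ v ∈ eBall n, ⟪f u, f v⟫ = ⟪u, v⟫) :
    ∃ T : E ≃ₗᵢ[ℝ] E, ∀ u ∈ eBall n, f u = T u := by
  let e : Fin n → E := fun i => (1 / 2 : ℝ) • EuclideanSpace.single i 1
  have he : ∀ i, e i ∈ eBall n := fun i => mem_eBall.2 (by simp [e, norm_smul]; norm_num)
  let b : Fin n → E := fun i => (2 : ℝ) • f (e i)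
  have hb : ∀ i, ∀ u ∈ eBall n, ⟪b i, f u⟫ = u i := by
    intro i u hu
    rw [real_inner_smul_left, hinner _ (he i) u hu]
    simp [e, real_inner_smul_left, EuclideanSpace.inner_single_left]
  have hbo : Orthonormal ℝ b := by
    rw [orthonormal_iff_ite]
    intro i j
    rw [real_inner_smul_right, hb i _ (he j)]
    simp [e, eq_comm]
  let B := OrthonormalBasis.mk hbo
    (hbo.linearIndependent.span_eq_top_of_card_eq_finrank' (by simp)).ge
  refine ⟨B.repr.symm, fun u hu => B.repr.injective ?_⟩
  ext i
  simp [B, OrthonormalBasis.repr_apply_apply, hb i u hu]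

end EinsteinGyrogroup

open EinsteinGyrogroup in
theorem stmt_16 {n : ℕ} (hn : 2 ≤ n)
    (f : EuclideanSpace ℝ (Fin n) → EuclideanSpace ℝ (Fin n))
    (hbij : Set.BijOn f (eBall n) (eBall n))
    (hhom : ∀ u ∈ eBall n, ∀ v ∈ eBall n, f (eAdd u v) = eAdd (f u) (f v)) :
    ContinuousOn f (eBall n) ∧
      ∃ T : EuclideanSpace ℝ (Fin n) ≃ₗᵢ[ℝ] EuclideanSpace ℝ (Fin n),
        ∀ u ∈ eBall n, f u = T u := by
  have hf : IsEinsteinHom f := ⟨hbij.mapsTo, hhom⟩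
  obtain ⟨T, hT⟩ := exists_linearIsometryEquiv_of_inner_map_eq
    fun u hu v hv => hf.inner_map hbij.injOn hn hu hv
  exact ⟨T.continuous.continuousOn.congr fun u hu => hT u hu, T, hT⟩
end
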